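/- arXiv:2106.06715 — 2 statements merged into one kernel-verified Lean document; each statement's English description precedes it below -/
import Mathlib

section
/- Let Y_s ∈ ℂ with Re(Y_s) > 0 and Im(Y_s) < 0, and define the delayed admittance Y_d(τ) = e^{−jωτ/2}·Y_s for ω > 0, τ ≥ 0. Then Re(Y_d(τ)) ≥ 0 for all τ ∈ [0, (2/ω)·arctan(−Re(Y_s)/Im(Y_s))], and Re(Y_d(τ)) < 0 for τ slightly beyond this value; i.e., the smallest τ ≥ 0 at which Re(Y_d(τ)) = 0 is τ* = (2/ω)·arctan(−Re(Y_s)/Im(Y_s)). -/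
/-!
With `t = arctan (-a / b)` for `Ys = a + b i`, `b < 0`, the identity `sin t = (-a / b) cos t` gives
`Re (e^{-iθ} Ys) = a cos θ + b sin θ = (-b / cos t) · sin (t - θ)`, with a positive factor.
Since `θ = ωτ/2` and `t = ωτ*/2`, the sign of `Re (Yd τ)` is that of `sin (ω (τ* - τ) / 2)`, and
`0 < t < π/2` places `τ*` at the first zero of this sine.
-/

open Complex

namespace Real

lemma cos_arctan_mul_add_mul_sin {a b : ℝ} (hb : b ≠ 0) (θ : ℝ) :
    cos (arctan (-a / b)) * (a * cos θ + b * sin θ) = -b * sin (arctan (-a / b) - θ) := by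
  have hsin : sin (arctan (-a / b)) = -a / b * cos (arctan (-a / b)) := by
    rw [sin_arctan, cos_arctan]; ring
  rw [sin_sub, hsin]
  field_simp
  ring

end Real

lemma re_exp_neg_mul_I_mul (θ : ℝ) (z : ℂ) :
    (exp (-(θ * I)) * z).re = z.re * Real.cos θ + z.im * Real.sin θ := by
  rw [← neg_mul, ← ofReal_neg, exp_mul_I, mul_re]
  simp only [add_re, add_im, ← ofReal_cos, ← ofReal_sin, ofReal_re, ofReal_im, mul_re, mul_im,
    I_re, I_im, Real.cos_neg, Real.sin_neg]
  ring

lemma re_exp_neg_mul_I_mul_eq_mul_sin {z : ℂ} (hz : z.im < 0) (θ : ℝ) :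
    (exp (-(θ * I)) * z).re =
      -z.im / Real.cos (Real.arctan (-z.re / z.im)) * Real.sin (Real.arctan (-z.re / z.im) - θ) := by
  have hcos := (Real.cos_arctan_pos (-z.re / z.im)).ne'
  rw [div_mul_eq_mul_div, ← Real.cos_arctan_mul_add_mul_sin hz.ne, re_exp_neg_mul_I_mul,
    mul_div_cancel_left₀ _ hcos]

/-- smallest delay making a rotated passive admittance non-passive. -/
theorem delayed_admittance_critical_delay
    (Ys : ℂ) (hre : 0 < Ys.re) (him : Ys.im < 0) (ω : ℝ) (hω : 0 < ω)
    (Yd : ℝ → ℂ) (hYd : ∀ τ, Yd τ = Complex.exp (-Complex.I * (ω : ℂ) * (τ : ℂ) / 2) * Ys)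
    (τstar : ℝ) (hτstar : τstar = (2 / ω) * Real.arctan (-Ys.re / Ys.im)) :
    (∀ τ ∈ Set.Icc (0 : ℝ) τstar, 0 ≤ (Yd τ).re) ∧
    (∃ ε > 0, ∀ τ ∈ Set.Ioo τstar (τstar + ε), (Yd τ).re < 0) ∧
    IsLeast {τ : ℝ | 0 ≤ τ ∧ (Yd τ).re = 0} τstar := by
  set t := Real.arctan (-Ys.re / Ys.im)
  set k := -Ys.im / Real.cos t
  have hk : 0 < k := div_pos (neg_pos.2 him) (Real.cos_arctan_pos _)
  have ht : 0 < t := Real.arctan_pos.2 (div_pos_of_neg_of_neg (neg_neg_of_pos hre) him)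
  have ht' : t < Real.pi / 2 := Real.arctan_lt_pi_div_two _
  have hτstar' : ω * τstar / 2 = t := by rw [hτstar]; field_simp
  have hYd_re : ∀ τ, (Yd τ).re = k * Real.sin (ω * (τstar - τ) / 2) := by
    intro τ
    rw [hYd, show -I * ω * τ / 2 = -(↑(ω * τ / 2) * I) by push_cast; ring,
      re_exp_neg_mul_I_mul_eq_mul_sin him]
    change k * Real.sin (t - ω * τ / 2) = _
    rw [← hτstar']
    ring_nf
  refine ⟨fun τ ⟨hτ0, hτ⟩ => ?_, ⟨2 * Real.pi / ω, by positivity, fun τ ⟨hτ, hτε⟩ => ?_⟩, ?_, ?_⟩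
  · rw [hYd_re]
    exact mul_nonneg hk.le (Real.sin_nonneg_of_nonneg_of_le_pi (by nlinarith) (by nlinarith))
  · rw [hYd_re]
    refine mul_neg_of_pos_of_neg hk (Real.sin_neg_of_neg_of_neg_pi_lt (by nlinarith) ?_)
    have hωτ : ω * τ < ω * τstar + 2 * Real.pi := by
      have h := mul_lt_mul_of_pos_left hτε hω
      rwa [mul_add, mul_div_cancel₀ _ hω.ne'] at h
    linarith
  · refine ⟨by nlinarith, by simp [hYd_re]⟩
  · rintro τ ⟨hτ0, hτ⟩
    by_contra! hlt
    rw [hYd_re] at hτ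
    have hsin : 0 < Real.sin (ω * (τstar - τ) / 2) :=
      Real.sin_pos_of_pos_of_lt_pi (by nlinarith) (by nlinarith)
    exact (mul_pos hk hsin).ne' hτ
end

section
/- For the optimal series-RL tuning, the quantity under the square root in the resistance formula, 2(K_c²+1)·[27K_c⁴ + K_c²(80 − 48r) − 64(r − 1)], with r = (√(64 − 16K_c² − 26K_c⁴) − K_c²)/8, is nonnegative for all K_c ∈ [0, 1], and vanishes at K_c = 0. -/
/-- nonnegativity of the radicand in the optimal resistance formula. -/
theorem resistance_radicand_nonneg :
    (∀ Kc ∈ Set.Icc (0 : ℝ) 1,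
        0 ≤ 2 * (Kc ^ 2 + 1) *
          (27 * Kc ^ 4 + Kc ^ 2 * (80 - 48 *
              ((Real.sqrt (64 - 16 * Kc ^ 2 - 26 * Kc ^ 4) - Kc ^ 2) / 8))
            - 64 * (((Real.sqrt (64 - 16 * Kc ^ 2 - 26 * Kc ^ 4) - Kc ^ 2) / 8) - 1))) ∧
    2 * ((0 : ℝ) ^ 2 + 1) *
          (27 * (0 : ℝ) ^ 4 + (0 : ℝ) ^ 2 * (80 - 48 *
              ((Real.sqrt (64 - 16 * (0 : ℝ) ^ 2 - 26 * (0 : ℝ) ^ 4) - (0 : ℝ) ^ 2) / 8))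
            - 64 * (((Real.sqrt (64 - 16 * (0 : ℝ) ^ 2 - 26 * (0 : ℝ) ^ 4) - (0 : ℝ) ^ 2) / 8) - 1))
      = 0 := by
  have h64 : Real.sqrt 64 = 8 := by
    rw [show (64 : ℝ) = 8 ^ 2 by norm_num, Real.sqrt_sq (by norm_num : (0:ℝ) ≤ 8)]
  constructor
  · intro Kc hKc
    obtain ⟨h0, h1⟩ := hKc
    set s := Real.sqrt (64 - 16 * Kc ^ 2 - 26 * Kc ^ 4) with hs
    have hsn : 0 ≤ s := Real.sqrt_nonneg _
    have hle : s ≤ 8 := by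
      rw [hs, ← h64]
      apply Real.sqrt_le_sqrt
      nlinarith [sq_nonneg Kc, sq_nonneg (Kc^2)]
    nlinarith [sq_nonneg Kc, sq_nonneg (Kc^2), mul_nonneg (mul_nonneg h0 h0) (sub_nonneg.2 hle)]
  · norm_num [h64]
end
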